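/- arXiv:1208.2267 — 5 statements merged into one kernel-verified Lean document; each statement's English description precedes it below -/
import Mathlib

section
/- The map taking a proper caterpillar to the reverse-class of its composition (where the i-th component is the number of vertices in the connected component containing the i-th spine vertex after removing all internal edges) is injective up to graph isomorphism. -/
open SimpleGraph

/-- Degree of a vertex (as the number of neighbors). -/
noncomputable def deg {V : Type} [Fintype V] (T : SimpleGraph V) (v : V) : ℕ :=
  (T.neighborSet v).ncard

/-- The partition of `|V|` given by the sizes of the connected components of `G`. -/
noncomputable def compPartition {V : Type} [Fintype V] (G : SimpleGraph V) : Multiset ℕ :=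
  letI : Fintype G.ConnectedComponent := Fintype.ofFinite _
  (Finset.univ : Finset G.ConnectedComponent).val.map fun c => Nat.card c.supp

/-- The U-polynomial of a graph, encoded as the multiset of monomials `x_{λ(A)}`
over edge subsets `A`; each monomial is recorded as the partition `λ(A)`. -/
noncomputable def Upoly {V : Type} [Fintype V] (T : SimpleGraph V) : Multiset (Multiset ℕ) :=
  letI := Classical.decEq V
  letI : DecidablePred fun A : Finset (Sym2 V) => ↑A ⊆ T.edgeSet :=
    fun _ => Classical.propDecidable _
  (((Finset.univ : Finset (Sym2 V)).powerset.filter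
      fun A => ↑A ⊆ T.edgeSet)).val.map
    fun A => compPartition (SimpleGraph.fromEdgeSet (↑A : Set (Sym2 V)))

/-- The set of leaf-edges of a graph: edges incident to a vertex of degree 1. -/
def leafEdges {V : Type} [Fintype V] (T : SimpleGraph V) : Set (Sym2 V) :=
  {e | e ∈ T.edgeSet ∧ ∃ v ∈ e, deg T v = 1}

/-- The restricted U-polynomial: only edge subsets containing all leaf-edges. -/
noncomputable def UpolyL {V : Type} [Fintype V] (T : SimpleGraph V) : Multiset (Multiset ℕ) :=
  letI := Classical.decEq V
  letI : DecidablePred fun A : Finset (Sym2 V) =>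
      (↑A : Set (Sym2 V)) ⊆ T.edgeSet ∧ leafEdges T ⊆ (↑A : Set (Sym2 V)) :=
    fun _ => Classical.propDecidable _
  (((Finset.univ : Finset (Sym2 V)).powerset.filter
      fun A : Finset (Sym2 V) => (↑A : Set (Sym2 V)) ⊆ T.edgeSet ∧ leafEdges T ⊆ (↑A : Set (Sym2 V)))).val.map
    fun A => compPartition (SimpleGraph.fromEdgeSet (↑A : Set (Sym2 V)))

/-- The edges along a list of vertices (consecutive pairs). -/
def spineEdges {V : Type} (s : List V) : Set (Sym2 V) :=
  {e | ∃ i : ℕ, ∃ h : i + 1 < s.length,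
    e = s(s.get ⟨i, Nat.lt_of_succ_lt h⟩, s.get ⟨i + 1, h⟩)}

/-- `s` is the spine of `T`: a nonempty path whose vertices are exactly the
internal (degree ≥ 2) vertices of `T`. -/
def IsSpine {V : Type} [Fintype V] (T : SimpleGraph V) (s : List V) : Prop :=
  s ≠ [] ∧ s.Nodup ∧ s.Chain' T.Adj ∧ ∀ v : V, v ∈ s ↔ 2 ≤ deg T v

/-- A caterpillar: a tree whose internal vertices induce a non-trivial path. -/
def IsCaterpillar {V : Type} [Fintype V] (T : SimpleGraph V) : Prop :=
  T.IsTree ∧ ∃ s : List V, IsSpine T s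

/-- A proper caterpillar: every spine vertex is adjacent to at least one leaf. -/
def IsProperCaterpillar {V : Type} [Fintype V] (T : SimpleGraph V) : Prop :=
  T.IsTree ∧ ∃ s : List V, IsSpine T s ∧ ∀ v ∈ s, ∃ w, T.Adj v w ∧ deg T w = 1

/-- The composition associated to a caterpillar with spine `s`: the `i`-th
component is the size of the connected component of the `i`-th spine vertex
after deleting all spine edges. -/
noncomputable def catComp {V : Type} [Fintype V] (T : SimpleGraph V) (s : List V) : List ℕ :=
  s.map fun v =>
    Nat.card ((T.deleteEdges (spineEdges s)).connectedComponentMk v).supp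

/-- Setting `x₁ = 0` in a polynomial encoded as a multiset of monomials:
all monomials containing `x₁` vanish. -/
def evalXoneZero (P : Multiset (Multiset ℕ)) : Multiset (Multiset ℕ) :=
  P.filter fun m => (1 : ℕ) ∉ m

/-!
Deleting the spine edges of a caterpillar leaves, around each spine vertex `s[i]`, a star made of
`s[i]` and the leaves hanging at it; a chord between non-consecutive spine vertices would close a
cycle, so these are the only edges besides the spine. Hence the `i`-th part of the composition is
one more than the number of leaves at `s[i]`. Labelling every vertex by the index of its star and
by whether it lies on the spine exhibits the caterpillar as the pullback of one fixed graph on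
`ℕ × Bool`, and the fibres of the labelling have sizes read off from the composition. Equal
compositions thus give equinumerous fibres, and any fibrewise bijection is a graph isomorphism.
Reversing the spine reverses the composition.
-/

namespace SimpleGraph

variable {V : Type*} {G : SimpleGraph V}

theorem Reachable.mem_of_forall_adj {S : Set V} {u v : V}
    (hS : ∀ ⦃a b⦄, a ∈ S → G.Adj a b → b ∈ S) (hu : u ∈ S) (h : G.Reachable u v) : v ∈ S := by
  rw [reachable_iff_reflTransGen] at h
  induction h with
  | refl => exact hu
  | tail _ hab ih => exact hS ih hab

theorem IsAcyclic.not_adj_getElem {l : List V} (hG : G.IsAcyclic) (hl : l.Nodup)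
    (hc : l.IsChain G.Adj) {i j : ℕ} (hij : i + 1 < j) (hj : j < l.length) :
    ¬ G.Adj l[i] l[j] := by
  intro hadj
  -- the stretch of `l` from `l[i]` to `l[j]` would be a second path besides the edge
  set m := (l.drop i).take (j - i + 1) with hm
  have hlen : m.length = j - i + 1 := by simp only [hm, List.length_take, List.length_drop]; omega
  have hget : ∀ k (hk : k < m.length), m[k] = l[i + k] := by intro k hk; simp [hm]
  have hne : m ≠ [] := List.ne_nil_of_length_pos (by omega)
  have hsub : m <:+: l := (List.take_prefix _ _).isInfix.trans (List.drop_suffix _ _).isInfix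
  let p : G.Walk l[i] l[j] := (Walk.ofSupport m hne (hc.infix hsub)).copy
    (by rw [List.head_eq_getElem, hget]; rfl)
    (by rw [List.getLast_eq_getElem, hget]; congr 1; omega)
  have hp : p.IsPath := by
    rw [Walk.isPath_def]; simpa [p] using hl.sublist hsub.sublist
  have hpq := (hG.subsingleton_path _ _).elim ⟨p, hp⟩ ⟨hadj.toWalk, hadj.isPath_toWalk⟩
  have := congrArg (fun q : G.Path _ _ => q.1.length) hpq
  simp only [p, Walk.length_copy, Walk.length_ofSupport, Adj.toWalk, Walk.length_cons,
    Walk.length_nil] at this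
  omega

theorem nonempty_iso_comap {ι V W : Type*} [Finite V] [Finite W] (H : SimpleGraph ι)
    {f : V → ι} {g : W → ι} (hfg : ∀ c, Nat.card {x // f x = c} = Nat.card {y // g y = c}) :
    Nonempty (H.comap f ≃g H.comap g) :=
  ⟨⟨Equiv.ofFiberEquiv fun c => (Finite.card_eq.mp (hfg c)).some, by
    intro a b
    simp only [comap_adj, Equiv.ofFiberEquiv_map]⟩⟩

end SimpleGraph

section SpineEdges

variable {V : Type} {i : ℕ}

theorem mk_getElem_mem_spineEdges {l : List V} (h : i + 1 < l.length) :
    s(l[i], l[i + 1]) ∈ spineEdges l :=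
  ⟨i, h, rfl⟩

theorem mem_of_mk_mem_spineEdges {l : List V} {a b : V} (h : s(a, b) ∈ spineEdges l) :
    a ∈ l ∧ b ∈ l := by
  obtain ⟨i, hi, he⟩ := h
  rcases Sym2.eq_iff.mp he with ⟨rfl, rfl⟩ | ⟨rfl, rfl⟩ <;>
    exact ⟨List.get_mem _ _, List.get_mem _ _⟩

theorem spineEdges_reverse_subset (l : List V) : spineEdges l.reverse ⊆ spineEdges l := by
  rintro _ ⟨i, hi, rfl⟩
  simp only [List.length_reverse] at hi
  have hk : l.length - 1 - (i + 1) + 1 < l.length := by omega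
  convert mk_getElem_mem_spineEdges hk using 1
  rw [Sym2.eq_swap]
  simp only [List.get_eq_getElem, List.getElem_reverse]
  congr 2
  omega

theorem spineEdges_reverse (l : List V) : spineEdges l.reverse = spineEdges l :=
  (spineEdges_reverse_subset l).antisymm (by simpa using spineEdges_reverse_subset l.reverse)

end SpineEdges

section Caterpillar

variable {V : Type} [Fintype V] {T : SimpleGraph V} {s : List V} {x y : V} {i j : ℕ}

theorem one_le_deg_of_adj (h : T.Adj x y) : 1 ≤ deg T x :=
  (Set.ncard_pos (Set.toFinite _)).mpr ⟨y, h⟩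

theorem eq_of_adj_of_deg_eq_one {z : V} (h : deg T x = 1) (hy : T.Adj x y) (hz : T.Adj x z) :
    y = z := by
  obtain ⟨a, ha⟩ := Set.ncard_eq_one.mp h
  have hy' : y ∈ T.neighborSet x := hy
  have hz' : z ∈ T.neighborSet x := hz
  rw [ha] at hy' hz'
  exact hy'.trans hz'.symm

namespace IsSpine

theorem deg_eq_one (hs : IsSpine T s) (hc : T.Connected) (hx : x ∉ s) : deg T x = 1 := by
  obtain ⟨v, hv⟩ := List.exists_mem_of_ne_nil s hs.1
  have : Nontrivial V := ⟨x, v, fun h => hx (h ▸ hv)⟩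
  obtain ⟨y, hxy⟩ := hc.preconnected.exists_adj_of_nontrivial x
  have := one_le_deg_of_adj hxy
  have := (hs.2.2.2 x).not.mp hx
  omega

theorem mem_of_adj (hs : IsSpine T s) (hc : T.Connected) (hx : x ∉ s) (hxy : T.Adj x y) :
    y ∈ s := by
  by_contra hy
  obtain ⟨v, hv⟩ := List.exists_mem_of_ne_nil s hs.1
  -- two adjacent leaves would form a whole connected component
  have hclosed : ∀ ⦃a b⦄, a ∈ ({x, y} : Set V) → T.Adj a b → b ∈ ({x, y} : Set V) := by
    rintro a b (rfl | rfl) hab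
    · exact Or.inr (eq_of_adj_of_deg_eq_one (hs.deg_eq_one hc hx) hab hxy)
    · exact Or.inl (eq_of_adj_of_deg_eq_one (hs.deg_eq_one hc hy) hab hxy.symm)
  rcases (hc.preconnected x v).mem_of_forall_adj hclosed (Or.inl rfl) with rfl | rfl
  exacts [hx hv, hy hv]

theorem exists_eq_getElem_or_adj (hs : IsSpine T s) (hc : T.Connected) (x : V) :
    ∃ i, ∃ hi : i < s.length, x = s[i] ∨ (x ∉ s ∧ T.Adj s[i] x) := by
  by_cases hx : x ∈ s
  · obtain ⟨i, hi, rfl⟩ := List.getElem_of_mem hx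
    exact ⟨i, hi, Or.inl rfl⟩
  · obtain ⟨y, hy⟩ := Set.ncard_eq_one.mp (hs.deg_eq_one hc hx)
    have hxy : T.Adj x y := (Set.ext_iff.mp hy y).mpr rfl
    obtain ⟨i, hi, rfl⟩ := List.getElem_of_mem (hs.mem_of_adj hc hx hxy)
    exact ⟨i, hi, Or.inr ⟨hx, hxy.symm⟩⟩

theorem adj_getElem_iff (hs : IsSpine T s) (hT : T.IsAcyclic) (hi : i < s.length)
    (hj : j < s.length) : T.Adj s[i] s[j] ↔ i + 1 = j ∨ j + 1 = i := by
  constructor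
  · intro h
    by_contra hne
    rcases Nat.lt_or_gt_of_ne (show i ≠ j by rintro rfl; exact h.ne rfl) with hij | hij
    · exact hT.not_adj_getElem hs.2.1 hs.2.2.1 (by omega) hj h
    · exact hT.not_adj_getElem hs.2.1 hs.2.2.1 (by omega) hi h.symm
  · rintro (rfl | rfl)
    · exact List.isChain_iff_getElem.mp hs.2.2.1 i hj
    · exact (List.isChain_iff_getElem.mp hs.2.2.1 j hi).symm

theorem adj_getElem_iff_of_adj (hs : IsSpine T s) (hc : T.Connected) (hi : i < s.length)
    (hj : j < s.length) (hx : x ∉ s) (hjx : T.Adj s[j] x) : T.Adj s[i] x ↔ i = j := by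
  refine ⟨fun hix => ?_, fun h => h ▸ hjx⟩
  exact hs.2.1.getElem_inj_iff.mp (eq_of_adj_of_deg_eq_one (hs.deg_eq_one hc hx) hix.symm hjx.symm)

theorem adj_deleteEdges_iff (hs : IsSpine T s) (hT : T.IsAcyclic) {a b : V} :
    (T.deleteEdges (spineEdges s)).Adj a b ↔ T.Adj a b ∧ ¬(a ∈ s ∧ b ∈ s) := by
  rw [deleteEdges_adj]
  refine and_congr_right fun hab => not_congr ⟨mem_of_mk_mem_spineEdges, ?_⟩
  rintro ⟨ha, hb⟩
  obtain ⟨i, hi, rfl⟩ := List.getElem_of_mem ha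
  obtain ⟨j, hj, rfl⟩ := List.getElem_of_mem hb
  rcases (hs.adj_getElem_iff hT hi hj).mp hab with rfl | rfl
  · exact mk_getElem_mem_spineEdges hj
  · rw [Sym2.eq_swap]
    exact mk_getElem_mem_spineEdges hi

theorem reachable_deleteEdges_iff (hs : IsSpine T s) (hT : T.IsTree) (hi : i < s.length) :
    (T.deleteEdges (spineEdges s)).Reachable s[i] x ↔ x = s[i] ∨ (x ∉ s ∧ T.Adj s[i] x) := by
  constructor
  · refine Reachable.mem_of_forall_adj (S := {y | y = s[i] ∨ (y ∉ s ∧ T.Adj s[i] y)}) ?_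
      (Or.inl rfl)
    rintro a b (rfl | ⟨ha, hia⟩) hab <;> rw [hs.adj_deleteEdges_iff hT.isAcyclic] at hab
    · exact Or.inr ⟨fun hb => hab.2 ⟨List.getElem_mem hi, hb⟩, hab.1⟩
    · exact Or.inl (eq_of_adj_of_deg_eq_one (hs.deg_eq_one hT.connected ha) hab.1 hia.symm)
  · rintro (rfl | ⟨hx, hix⟩)
    · rfl
    · exact Adj.reachable ((hs.adj_deleteEdges_iff hT.isAcyclic).mpr ⟨hix, fun h => hx h.2⟩)

end IsSpine

/-- A caterpillar is the pullback of this graph along `spineLabel`: `(i, true)` stands for the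
`i`-th spine vertex and `(i, false)` for each of the leaves hanging at it. -/
def caterpillarModel : SimpleGraph (ℕ × Bool) where
  Adj p q := (p.2 ∧ q.2 ∧ (p.1 + 1 = q.1 ∨ q.1 + 1 = p.1)) ∨ (p.1 = q.1 ∧ p.2 ≠ q.2)

open Classical in
noncomputable def spineLabel (T : SimpleGraph V) (s : List V) (x : V) : ℕ × Bool :=
  (s.findIdx fun v => (T.deleteEdges (spineEdges s)).Reachable v x, x ∈ s)

namespace IsSpine

theorem spineLabel_fst_eq (hs : IsSpine T s) (hT : T.IsTree) (hi : i < s.length)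
    (h : (T.deleteEdges (spineEdges s)).Reachable s[i] x) : (spineLabel T s x).1 = i := by
  rw [spineLabel, List.findIdx_eq hi]
  refine ⟨by simpa using h, fun j hji => ?_⟩
  simp only [decide_eq_false_iff_not]
  intro hj
  rcases (hs.reachable_deleteEdges_iff hT (hji.trans hi)).mp (hj.trans h.symm) with hij | ⟨hi', -⟩
  · exact hji.ne ((hs.2.1.getElem_inj_iff).mp hij).symm
  · exact hi' (List.getElem_mem hi)

theorem spineLabel_getElem (hs : IsSpine T s) (hT : T.IsTree) (hi : i < s.length) :
    spineLabel T s s[i] = (i, true) :=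
  Prod.ext (hs.spineLabel_fst_eq hT hi Reachable.rfl) (by simp [spineLabel])

theorem spineLabel_of_adj (hs : IsSpine T s) (hT : T.IsTree) (hi : i < s.length) (hx : x ∉ s)
    (hix : T.Adj s[i] x) : spineLabel T s x = (i, false) :=
  Prod.ext
    (hs.spineLabel_fst_eq hT hi ((hs.reachable_deleteEdges_iff hT hi).mpr (Or.inr ⟨hx, hix⟩)))
    (by simp [spineLabel, hx])

theorem spineLabel_fst_lt (hs : IsSpine T s) (hT : T.IsTree) (x : V) :
    (spineLabel T s x).1 < s.length := by
  obtain ⟨i, hi, rfl | ⟨hx, hix⟩⟩ := hs.exists_eq_getElem_or_adj hT.connected x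
  · rwa [hs.spineLabel_getElem hT hi]
  · rwa [hs.spineLabel_of_adj hT hi hx hix]

theorem spineLabel_eq_true_iff (hs : IsSpine T s) (hT : T.IsTree) (hi : i < s.length) :
    spineLabel T s x = (i, true) ↔ x = s[i] := by
  refine ⟨fun h => ?_, fun h => h ▸ hs.spineLabel_getElem hT hi⟩
  obtain ⟨j, hj, rfl | ⟨hx, hjx⟩⟩ := hs.exists_eq_getElem_or_adj hT.connected x
  · rw [hs.spineLabel_getElem hT hj, Prod.mk.injEq] at h
    simp only [h.1]
  · simp [hs.spineLabel_of_adj hT hj hx hjx] at h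

theorem spineLabel_eq_false_iff (hs : IsSpine T s) (hT : T.IsTree) (hi : i < s.length) :
    spineLabel T s x = (i, false) ↔ x ∉ s ∧ T.Adj s[i] x := by
  refine ⟨fun h => ?_, fun h => hs.spineLabel_of_adj hT hi h.1 h.2⟩
  obtain ⟨j, hj, rfl | ⟨hx, hjx⟩⟩ := hs.exists_eq_getElem_or_adj hT.connected x
  · simp [hs.spineLabel_getElem hT hj] at h
  · rw [hs.spineLabel_of_adj hT hj hx hjx, Prod.mk.injEq] at h
    simp only [← h.1]
    exact ⟨hx, hjx⟩

theorem card_spineLabel_eq_true (hs : IsSpine T s) (hT : T.IsTree) (i : ℕ) :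
    Nat.card {x // spineLabel T s x = (i, true)} = if i < s.length then 1 else 0 := by
  split_ifs with hi
  · rw [Nat.card_congr (Equiv.subtypeEquivRight fun x => hs.spineLabel_eq_true_iff hT hi)]
    exact Nat.card_unique
  · have : IsEmpty {x // spineLabel T s x = (i, true)} :=
      ⟨fun ⟨x, hx⟩ => hi (by simpa [hx] using hs.spineLabel_fst_lt hT x)⟩
    exact Nat.card_of_isEmpty

theorem card_spineLabel_eq_false_add_one (hs : IsSpine T s) (hT : T.IsTree) (i : ℕ) :
    Nat.card {x // spineLabel T s x = (i, false)} + 1 = (catComp T s).getD i 1 := by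
  by_cases hi : i < s.length
  · have hsupp : ((T.deleteEdges (spineEdges s)).connectedComponentMk s[i]).supp =
        insert s[i] {x | x ∉ s ∧ T.Adj s[i] x} := by
      ext x
      rw [ConnectedComponent.mem_supp_iff, ConnectedComponent.eq, reachable_comm,
        hs.reachable_deleteEdges_iff hT hi]
      rfl
    have hnot : s[i] ∉ {x | x ∉ s ∧ T.Adj s[i] x} := fun h => h.1 (List.getElem_mem hi)
    rw [catComp, List.getD_eq_getElem _ _ (by simpa), List.getElem_map, hsupp,
      Nat.card_coe_set_eq, Set.ncard_insert_of_notMem hnot, ← Nat.card_coe_set_eq,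
      Nat.card_congr (Equiv.subtypeEquivRight fun x => hs.spineLabel_eq_false_iff hT hi)]
    rfl
  · have : IsEmpty {x // spineLabel T s x = (i, false)} :=
      ⟨fun ⟨x, hx⟩ => hi (by simpa [hx] using hs.spineLabel_fst_lt hT x)⟩
    rw [Nat.card_of_isEmpty,
      List.getD_eq_default _ _ (by simpa [catComp] using Nat.le_of_not_lt hi)]

theorem comap_spineLabel (hs : IsSpine T s) (hT : T.IsTree) :
    caterpillarModel.comap (spineLabel T s) = T := by
  ext x y
  rw [comap_adj]
  obtain ⟨i, hi, rfl | ⟨hx, hix⟩⟩ := hs.exists_eq_getElem_or_adj hT.connected x <;>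
    obtain ⟨j, hj, rfl | ⟨hy, hjy⟩⟩ := hs.exists_eq_getElem_or_adj hT.connected y
  · rw [hs.spineLabel_getElem hT hi, hs.spineLabel_getElem hT hj,
      hs.adj_getElem_iff hT.isAcyclic hi hj]
    simp [caterpillarModel]
  · rw [hs.spineLabel_getElem hT hi, hs.spineLabel_of_adj hT hj hy hjy,
      hs.adj_getElem_iff_of_adj hT.connected hi hj hy hjy]
    simp [caterpillarModel]
  · rw [hs.spineLabel_of_adj hT hi hx hix, hs.spineLabel_getElem hT hj, T.adj_comm,
      hs.adj_getElem_iff_of_adj hT.connected hj hi hx hix]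
    simpa [caterpillarModel] using eq_comm
  · rw [hs.spineLabel_of_adj hT hi hx hix, hs.spineLabel_of_adj hT hj hy hjy]
    simpa [caterpillarModel] using fun h => hy (hs.mem_of_adj hT.connected hx h)

theorem reverse (hs : IsSpine T s) : IsSpine T s.reverse :=
  ⟨List.reverse_ne_nil_iff.mpr hs.1, List.nodup_reverse.mpr hs.2.1,
    List.isChain_reverse.mpr (hs.2.2.1.imp fun _ _ h => h.symm),
    fun v => List.mem_reverse.trans (hs.2.2.2 v)⟩

end IsSpine

theorem catComp_reverse : catComp T s.reverse = (catComp T s).reverse := by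
  rw [catComp, catComp, spineEdges_reverse, List.map_reverse]

theorem nonempty_iso_of_catComp_eq {W : Type} [Fintype W] {S : SimpleGraph W} {t : List W}
    (hT : T.IsTree) (hS : S.IsTree) (hs : IsSpine T s) (ht : IsSpine S t)
    (h : catComp T s = catComp S t) : Nonempty (T ≃g S) := by
  have hlen : s.length = t.length := by simpa [catComp] using congrArg List.length h
  rw [← hs.comap_spineLabel hT, ← ht.comap_spineLabel hS]
  refine caterpillarModel.nonempty_iso_comap fun ⟨i, b⟩ => ?_
  cases b
  · have hTi := hs.card_spineLabel_eq_false_add_one hT i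
    have hSi := ht.card_spineLabel_eq_false_add_one hS i
    rw [h] at hTi
    omega
  · rw [hs.card_spineLabel_eq_true hT, ht.card_spineLabel_eq_true hS, hlen]

end Caterpillar

/-- The map `Φ` taking a proper caterpillar to the
reverse-class of its composition is injective up to graph isomorphism. -/
theorem phi_injective_up_to_iso {V W : Type} [Fintype V] [Fintype W]
    (T : SimpleGraph V) (S : SimpleGraph W)
    (hT : IsProperCaterpillar T) (hS : IsProperCaterpillar S)
    (sT : List V) (sS : List W) (hsT : IsSpine T sT) (hsS : IsSpine S sS)
    (h : catComp T sT = catComp S sS ∨ catComp T sT = (catComp S sS).reverse) :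
    Nonempty (T ≃g S) := by
  rcases h with h | h
  · exact nonempty_iso_of_catComp_eq hT.1 hS.1 hsT hsS h
  · rw [← catComp_reverse] at h
    exact nonempty_iso_of_catComp_eq hT.1 hS.1 hsT hsS.reverse h
end

section
/- For a fixed composition β, the subsets A ⊆ E(T) containing all leaf edges of the proper caterpillar T = Ψ(β) are in bijection with the coarsenings α of β, and this bijection preserves the induced partition: λ(A) = λ(α). -/
/-- A composition: a nonempty list of positive integers. -/
def IsComposition (l : List ℕ) : Prop := l ≠ [] ∧ ∀ x ∈ l, 0 < x

/-- `Coarsens α β` : α is a coarsening of β, i.e. α is obtained from β by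
summing blocks of consecutive components. -/
def Coarsens (α β : List ℕ) : Prop :=
  ∃ P : List (List ℕ), P.flatten = β ∧ (∀ p ∈ P, p ≠ []) ∧ α = P.map List.sum

/-- All ways of splitting a list into blocks of consecutive elements. -/
def splits : List ℕ → List (List (List ℕ))
  | [] => [[]]
  | a :: rest =>
    (splits rest).flatMap fun s =>
      match s with
      | [] => [[[a]]]
      | b :: bs => [(a :: b) :: bs, [a] :: b :: bs]

/-- The list of all coarsenings of a composition. -/
def coarsenings (β : List ℕ) : List (List ℕ) :=
  (splits β).map (fun P => P.map List.sum)

/-- The L-polynomial of a composition, encoded as the multiset of monomials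
`x_{λ(α)}` over coarsenings `α` of `β`; each monomial is recorded as the
multiset (partition) of the components of `α`. -/
def Lpoly (β : List ℕ) : Multiset (Multiset ℕ) :=
  ((coarsenings β).map fun α => (α : Multiset ℕ) : List (Multiset ℕ))

/-- Near-concatenation of compositions. -/
def odot : List ℕ → List ℕ → List ℕ
  | [], β => β
  | [a], [] => [a]
  | [a], b :: bs => (a + b) :: bs
  | a :: b :: as, β => a :: odot (b :: as) β

/-- `odotPow α i` is the `i`-fold near-concatenation `α^{⊙i}`. -/
def odotPow (α : List ℕ) : ℕ → List ℕ
  | 0 => []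
  | n + 1 => odot (odotPow α n) α

/-- The composition product `β ∘ α = α^{⊙β₁} · α^{⊙β₂} ⋯ α^{⊙β_k}`. -/
def circ (β α : List ℕ) : List ℕ :=
  (β.map (odotPow α)).flatten

/-- A trivial factorization `β ∘ γ`. -/
def TrivialFact (β γ : List ℕ) : Prop :=
  β = [1] ∨ γ = [1] ∨ (β.length = 1 ∧ γ.length = 1) ∨
    ((∀ b ∈ β, b = 1) ∧ (∀ c ∈ γ, c = 1))

/-- A composition admitting only trivial factorizations. -/
def IrredComp (f : List ℕ) : Prop :=
  ∀ β γ : List ℕ, IsComposition β → IsComposition γ → f = circ β γ → TrivialFact β γ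

/-- Product of a list of compositions under `∘` (with identity `[1]`). -/
def circList : List (List ℕ) → List ℕ
  | [] => [1]
  | f :: fs => circ f (circList fs)

/-- `fs` is an irreducible factorization of `α`:
all factors are irreducible compositions, and no consecutive product
`α_i ∘ α_{i+1}` is a trivial factorization. -/
def IsIrredFactorization (α : List ℕ) (fs : List (List ℕ)) : Prop :=
  fs ≠ [] ∧ (∀ f ∈ fs, IsComposition f ∧ IrredComp f) ∧
    fs.Chain' (fun a b => ¬ TrivialFact a b) ∧ α = circList fs

/-- `N(γ) = |γ| - ℓ(γ)`. -/
def Nstat (γ : List ℕ) : ℕ := γ.sum - γ.length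


open SimpleGraph

/-!
Deleting the spine edges of the caterpillar leaves one component per spine vertex, its leg, and
the leg sizes are the parts of `β`. Every edge is a spine edge or a leaf edge, so an edge set
`A` containing all leaf edges is determined by the spine edges it retains. The components of `A`
are the unions of legs over the maximal runs of spine vertices joined by retained spine edges
(`List.splitBy`), hence `λ(A)` is the partition of the coarsening `α(A)` that sums `β` over these
runs. Since the parts of `β` are positive, `α(A)` determines the runs and hence `A`, and every
splitting of `β` into consecutive blocks is realised by some set of runs.
-/

namespace List

variable {α : Type*}

theorem splitBy_singleton (r : α → α → Bool) (a : α) : [a].splitBy r = [[a]] :=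
  splitBy_of_isChain (cons_ne_nil a []) (isChain_singleton a)

theorem exists_splitBy_cons_eq (r : α → α → Bool) (b : α) (m : List α) :
    ∃ c cs, (b :: m).splitBy r = (b :: c) :: cs := by
  obtain ⟨d, cs, hd⟩ := ne_nil_iff_exists_cons.mp (splitBy_ne_nil.mpr (cons_ne_nil b m))
  obtain ⟨b', c, rfl⟩ := ne_nil_iff_exists_cons.mp (ne_nil_of_mem_splitBy (hd ▸ mem_cons_self))
  have hhead := congrArg head? (flatten_splitBy r (b :: m))
  rw [hd] at hhead
  obtain rfl : b' = b := by simpa using hhead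
  exact ⟨c, cs, hd⟩

theorem splitBy_cons_cons (r : α → α → Bool) (a b : α) (m : List α) :
    (a :: b :: m).splitBy r =
      if r a b then ((b :: m).splitBy r).modifyHead (cons a) else [a] :: (b :: m).splitBy r := by
  split_ifs with hab
  · obtain ⟨c, cs, hc⟩ := exists_splitBy_cons_eq r b m
    obtain ⟨hflat, hnil, hchain, hgaps⟩ := splitBy_eq_iff.mp hc
    rw [hc, modifyHead_cons, splitBy_eq_iff]
    refine ⟨by simp [hflat], by simpa using hnil, ?_, ?_⟩
    · intro q hq
      rcases mem_cons.mp hq with rfl | hq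
      · exact isChain_cons_cons.mpr ⟨hab, hchain _ mem_cons_self⟩
      · exact hchain q (mem_cons_of_mem _ hq)
    · cases cs with
      | nil => exact isChain_singleton _
      | cons d ds =>
        rw [isChain_cons_cons] at hgaps ⊢
        obtain ⟨⟨_, hd, hgap⟩, hrest⟩ := hgaps
        refine ⟨⟨cons_ne_nil _ _, hd, ?_⟩, hrest⟩
        rwa [getLast_cons (cons_ne_nil _ _)]
  · rw [← singleton_append, splitBy_append_cons m (by simpa using hab), splitBy_singleton]
    rfl

theorem splitBy_eq_splitBy_iff {r r' : α → α → Bool} {l : List α} :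
    l.splitBy r = l.splitBy r' ↔ l.IsChain fun x y => r x y = r' x y := by
  induction l with
  | nil => simp
  | cons a l ih =>
    cases l with
    | nil => simp [splitBy_singleton]
    | cons b m =>
      have hhead : ∀ (r₀ : α → α → Bool) (Y : List (List α)),
          ((b :: m).splitBy r₀).modifyHead (cons a) ≠ [a] :: Y := by
        intro r₀ Y h
        obtain ⟨c, cs, hc⟩ := exists_splitBy_cons_eq r₀ b m
        simp [hc] at h
      have hinj : Function.Injective (modifyHead (cons a)) := by
        rintro (_ | ⟨c, cs⟩) (_ | ⟨c', cs'⟩) h <;> simp_all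
      rw [splitBy_cons_cons, splitBy_cons_cons, isChain_cons_cons, ← ih]
      cases hr : r a b <;> cases hr' : r' a b <;>
        simp only [if_true, Bool.false_eq_true, if_false, cons.injEq, true_and, reduceCtorEq,
          false_and, iff_false, hinj.eq_iff]
      · exact (hhead r' _).symm
      · exact hhead r _

theorem exists_mem_splitBy_of_getElem (r : α → α → Bool) :
    ∀ {l : List α} {i : ℕ} (hi : i + 1 < l.length), r l[i] l[i + 1] →
      ∃ q ∈ l.splitBy r, l[i] ∈ q ∧ l[i + 1] ∈ q
  | a :: b :: m, 0, _, hab => by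
    obtain ⟨c, cs, hc⟩ := exists_splitBy_cons_eq r b m
    refine ⟨a :: b :: c, ?_, mem_cons_self, by simp⟩
    simp [splitBy_cons_cons, show r a b from hab, hc]
  | a :: b :: m, k + 1, hi, h => by
    obtain ⟨q, hq, hk, hk1⟩ :=
      exists_mem_splitBy_of_getElem r (l := b :: m) (i := k) (by simpa using hi) h
    rw [splitBy_cons_cons]
    split_ifs
    · obtain ⟨c, cs, hc⟩ := exists_splitBy_cons_eq r b m
      rw [hc] at hq ⊢
      rcases mem_cons.mp hq with rfl | hq
      · exact ⟨a :: b :: c, mem_cons_self, mem_cons_of_mem a hk, mem_cons_of_mem a hk1⟩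
      · exact ⟨q, mem_cons_of_mem _ hq, hk, hk1⟩
    · exact ⟨q, mem_cons_of_mem _ hq, hk, hk1⟩

theorem eq_of_mem_getElem_of_nodup_flatten {L : List (List α)} (hL : L.flatten.Nodup) {x : α}
    {i j : ℕ} {hi : i < L.length} {hj : j < L.length} (hxi : x ∈ L[i]) (hxj : x ∈ L[j]) :
    i = j := by
  have hdisj := pairwise_iff_getElem.mp (nodup_flatten.mp hL).2
  by_contra hij
  rcases Nat.lt_or_gt_of_ne hij with h | h
  · exact hdisj i j hi hj h hxi hxj
  · exact hdisj j i hj hi h hxj hxi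

theorem eq_of_mem_of_nodup_flatten {L : List (List α)} (hL : L.flatten.Nodup) {q q' : List α}
    (hq : q ∈ L) (hq' : q' ∈ L) {x : α} (hx : x ∈ q) (hx' : x ∈ q') : q = q' := by
  obtain ⟨i, hi, rfl⟩ := mem_iff_getElem.mp hq
  obtain ⟨j, hj, rfl⟩ := mem_iff_getElem.mp hq'
  obtain rfl := eq_of_mem_getElem_of_nodup_flatten hL hx hx'
  rfl

theorem splitBy_flatten_of_nodup [DecidableEq α] {Q : List (List α)} (hQ : [] ∉ Q)
    (hnd : Q.flatten.Nodup) :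
    Q.flatten.splitBy (fun x y => decide (∃ q ∈ Q, x ∈ q ∧ y ∈ q)) = Q := by
  refine splitBy_flatten hQ (fun q hq => ?_) (isChain_iff_getElem.mpr fun i hi => ?_)
  · exact (pairwise_of_forall_mem_list fun x hx y hy => by
      simpa using ⟨q, hq, hx, hy⟩).isChain
  · have hne : ∀ k (hk : k < Q.length), Q[k] ≠ [] := fun k hk h => hQ (h ▸ getElem_mem hk)
    refine ⟨hne i (by omega), hne (i + 1) hi, ?_⟩
    simp only [decide_eq_false_iff_not, not_exists, not_and]
    intro q hq hlast hhead
    obtain ⟨j, hj, rfl⟩ := mem_iff_getElem.mp hq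
    have h1 := eq_of_mem_getElem_of_nodup_flatten hnd (getLast_mem _) hlast
    have h2 := eq_of_mem_getElem_of_nodup_flatten hnd (head_mem _) hhead
    omega

theorem eq_of_append_eq_append_of_sum_eq {p p' l l' : List ℕ} (h : p ++ l = p' ++ l')
    (hsum : p.sum = p'.sum) (hpos : ∀ x ∈ p ++ l, 0 < x) : p = p' := by
  have hnil : ∀ t : List ℕ, (∀ x ∈ t, 0 < x) → t.sum = 0 → t = [] := fun t ht h0 =>
    eq_nil_iff_forall_not_mem.mpr fun x hx => (ht x hx).ne' (sum_eq_zero_iff.mp h0 x hx)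
  rcases append_eq_append_iff.mp h with ⟨t, rfl, rfl⟩ | ⟨t, rfl, rfl⟩
  · rw [hnil t (fun x hx => hpos x (by simp [hx])) (by simpa using hsum.symm), append_nil]
  · rw [hnil t (fun x hx => hpos x (by simp [hx])) (by simpa using hsum), append_nil]

theorem eq_of_map_sum_eq {P P' : List (List ℕ)} (hflat : P.flatten = P'.flatten)
    (hpos : ∀ x ∈ P.flatten, 0 < x) (hsum : P.map sum = P'.map sum) : P = P' := by
  induction P generalizing P' with
  | nil => exact (map_eq_nil_iff.mp hsum.symm).symm
  | cons p P ih =>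
    obtain _ | ⟨p', P'⟩ := P'
    · simp at hsum
    simp only [map_cons, cons.injEq] at hsum
    simp only [flatten_cons] at hflat hpos
    obtain rfl := eq_of_append_eq_append_of_sum_eq hflat hsum.1 hpos
    rw [ih (append_cancel_left hflat) (fun x hx => hpos x (mem_append_right _ hx)) hsum.2]

theorem exists_flatten_eq_of_flatten_eq_map {β : Type*} (f : α → β) :
    ∀ {P : List (List β)} {l : List α}, P.flatten = l.map f →
      ∃ Q : List (List α), Q.flatten = l ∧ Q.map (map f) = P
  | [], l, h => ⟨[], by simpa [eq_comm] using h, rfl⟩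
  | p :: P, l, h => by
    obtain ⟨l₁, l₂, rfl, h₁, h₂⟩ := map_eq_append_iff.mp (by simpa using h.symm)
    obtain ⟨Q, rfl, hQ⟩ := exists_flatten_eq_of_flatten_eq_map f h₂.symm
    exact ⟨l₁ :: Q, rfl, by simp [h₁, hQ]⟩

end List

theorem Nat.card_subtype_mem_eq_sum {V α : Type*} [Finite V] (f : V → α) {l : List α}
    (hl : l.Nodup) : Nat.card {v // f v ∈ l} = (l.map fun x => Nat.card {v // f v = x}).sum := by
  classical
  have := Fintype.ofFinite V
  simp only [Nat.card_eq_fintype_card, Fintype.card_subtype]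
  rw [Finset.card_eq_sum_card_fiberwise (f := f) (t := l.toFinset) (fun v hv => by simpa using hv),
    ← List.sum_toFinset _ hl]
  refine Finset.sum_congr rfl fun x hx => ?_
  rw [Finset.filter_filter]
  congr 1
  ext v
  simp only [Finset.mem_filter, Finset.mem_univ, true_and]
  constructor
  · exact And.right
  · rintro rfl; exact ⟨List.mem_toFinset.mp hx, rfl⟩

namespace SimpleGraph

variable {V : Type} {G : SimpleGraph V}

theorem reachable_of_isChain_adj {l : List V} (hl : l.IsChain G.Adj) {x y : V} (hx : x ∈ l)
    (hy : y ∈ l) : G.Reachable x y := by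
  have hne : l ≠ [] := List.ne_nil_of_mem hx
  have hhead := List.IsChain.induction (G.Reachable (l.head hne) ·) l hl
    (fun _ _ hab ha => ha.trans hab.reachable) (fun _ => Reachable.refl _)
  exact (hhead x hx).symm.trans (hhead y hy)

theorem reachable_getElem_of_adj {l : List V} {a b : ℕ} (hab : a ≤ b) (hb : b < l.length)
    (hadj : ∀ k (hk : k + 1 < l.length), a ≤ k → k < b → G.Adj l[k] l[k + 1]) :
    G.Reachable l[a] l[b] := by
  induction b, hab using Nat.le_induction with
  | base => rfl
  | succ b hab ih =>
    exact (ih (by omega) fun k hk h1 h2 => hadj k hk h1 (by omega)).trans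
      (hadj b hb hab (by omega)).reachable

theorem compPartition_eq_of_reachable_iff [Fintype V] {B : Type*} [Fintype B] (κ : V → B)
    (hκ : Function.Surjective κ) (h : ∀ u v, G.Reachable u v ↔ κ u = κ v) :
    compPartition G = (Finset.univ : Finset B).val.map fun b => Nat.card {v // κ v = b} := by
  let : Fintype G.ConnectedComponent := Fintype.ofFinite _
  let e : G.ConnectedComponent ≃ B := Equiv.ofBijective
    (ConnectedComponent.lift κ fun u v p _ => (h u v).mp p.reachable)
    ⟨fun c c' hcc' => by
      induction c using ConnectedComponent.ind
      induction c' using ConnectedComponent.ind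
      exact ConnectedComponent.sound ((h _ _).mpr hcc'),
     fun b => (hκ b).elim fun v hv => ⟨G.connectedComponentMk v, hv⟩⟩
  have hcard : ∀ c, Nat.card c.supp = Nat.card {v // κ v = e c} := by
    intro c
    induction c using ConnectedComponent.ind with | h u => ?_
    refine Nat.card_congr (Equiv.subtypeEquivRight fun v => ?_)
    rw [ConnectedComponent.mem_supp_iff, ConnectedComponent.eq]
    exact h v u
  unfold compPartition
  rw [← Multiset.map_univ_val_equiv e, Multiset.map_map]
  exact Multiset.map_congr rfl fun c _ => hcard c

theorem compPartition_eq_map_of_reachable_iff [Fintype V] {α : Type*} {Q : List (List α)}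
    (hQ : Q.flatten.Nodup) (ρ : V → α) (hρ : ∀ v, ρ v ∈ Q.flatten)
    (hhit : ∀ q ∈ Q, ∃ v, ρ v ∈ q)
    (h : ∀ u v, G.Reachable u v ↔ ∃ q ∈ Q, ρ u ∈ q ∧ ρ v ∈ q) :
    compPartition G = (Q.map fun q => Nat.card {v // ρ v ∈ q} : Multiset ℕ) := by
  have hblock : ∀ v, ∃ p : Fin Q.length, ρ v ∈ Q[(p : ℕ)] := fun v => by
    obtain ⟨q, hq, hv⟩ := List.mem_flatten.mp (hρ v)
    obtain ⟨p, hp, rfl⟩ := List.mem_iff_getElem.mp hq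
    exact ⟨⟨p, hp⟩, hv⟩
  choose κ hκ using hblock
  have hκ_iff : ∀ v p, κ v = p ↔ ρ v ∈ Q[(p : ℕ)] := fun v p =>
    ⟨fun h => h ▸ hκ v,
      fun h => Fin.ext (List.eq_of_mem_getElem_of_nodup_flatten hQ (hκ v) h)⟩
  have hreach : ∀ u v, G.Reachable u v ↔ κ u = κ v := by
    intro u v
    rw [h]
    constructor
    · rintro ⟨q, hq, hu, hv⟩
      obtain ⟨p, hp, rfl⟩ := List.mem_iff_getElem.mp hq
      rw [(hκ_iff u ⟨p, hp⟩).mpr hu, (hκ_iff v ⟨p, hp⟩).mpr hv]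
    · exact fun huv => ⟨_, List.getElem_mem _, hκ u, huv ▸ hκ v⟩
  have hsurj : Function.Surjective κ := fun p =>
    (hhit _ (List.getElem_mem p.2)).imp fun v hv => (hκ_iff v p).mpr hv
  rw [compPartition_eq_of_reachable_iff κ hsurj hreach, Fin.univ_val_map,
    ← List.ofFn_getElem_eq_map]
  congr 2
  funext p
  exact Nat.card_congr (Equiv.subtypeEquivRight (hκ_iff · p))

end SimpleGraph

theorem mem_spineEdges_iff {V : Type} {s : List V} {e : Sym2 V} :
    e ∈ spineEdges s ↔ ∃ i, ∃ h : i + 1 < s.length, e = s(s[i], s[i + 1]) := by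
  simp [spineEdges]

theorem mem_of_mem_spineEdges {V : Type} {s : List V} {e : Sym2 V} (he : e ∈ spineEdges s)
    {v : V} (hv : v ∈ e) : v ∈ s := by
  obtain ⟨i, hi, rfl⟩ := mem_spineEdges_iff.mp he
  rcases Sym2.mem_iff.mp hv with rfl | rfl <;> exact List.getElem_mem _

namespace IsSpine

variable {V : Type} [Fintype V] {T : SimpleGraph V} {s : List V}

theorem nodup (hs : IsSpine T s) : s.Nodup := hs.2.1

theorem mem_iff (hs : IsSpine T s) (v : V) : v ∈ s ↔ 2 ≤ deg T v := hs.2.2.2 v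

theorem adj_getElem (hs : IsSpine T s) {i : ℕ} (hi : i + 1 < s.length) : T.Adj s[i] s[i + 1] :=
  List.isChain_iff_getElem.mp hs.2.2.1 i hi

theorem spineEdges_subset_edgeSet (hs : IsSpine T s) : spineEdges s ⊆ T.edgeSet := by
  intro e he
  obtain ⟨i, hi, rfl⟩ := mem_spineEdges_iff.mp he
  exact hs.adj_getElem hi

theorem disjoint_spineEdges_leafEdges (hs : IsSpine T s) :
    Disjoint (spineEdges s) (leafEdges T) := by
  refine Set.disjoint_left.mpr fun e he ⟨_, v, hv, hdeg⟩ => ?_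
  have := (hs.mem_iff v).mp (mem_of_mem_spineEdges he hv)
  omega

theorem not_reachable_deleteEdges (hT : T.IsTree) (hs : IsSpine T s) {i j : ℕ} (hij : i < j)
    (hj : j < s.length) :
    ¬ (T.deleteEdges {s(s[i], s[i + 1])}).Reachable s[i] s[j] := by
  intro hreach
  have hbridge : T.IsBridge s(s[i], s[i + 1]) :=
    isAcyclic_iff_forall_adj_isBridge.mp hT.isAcyclic (hs.adj_getElem (by omega))
  refine isBridge_iff.mp hbridge (hreach.trans (reachable_getElem_of_adj (by omega) hj ?_).symm)
  intro k hk hik _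
  refine deleteEdges_adj.mpr ⟨hs.adj_getElem hk, fun he => ?_⟩
  rcases Sym2.eq_iff.mp (Set.mem_singleton_iff.mp he) with ⟨h, -⟩ | ⟨-, h⟩
  · have := hs.nodup.getElem_inj_iff.mp h; omega
  · have := hs.nodup.getElem_inj_iff.mp h; omega

theorem eq_succ_of_adj_getElem (hT : T.IsTree) (hs : IsSpine T s) {i j : ℕ} (hij : i < j)
    (hj : j < s.length) (hadj : T.Adj s[i] s[j]) : j = i + 1 := by
  by_contra hne
  refine hs.not_reachable_deleteEdges hT hij hj (deleteEdges_adj.mpr ⟨hadj, ?_⟩).reachable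
  intro he
  rcases Sym2.eq_iff.mp (Set.mem_singleton_iff.mp he) with ⟨-, h2⟩ | ⟨h1, -⟩
  · exact hne (hs.nodup.getElem_inj_iff.mp h2)
  · have := hs.nodup.getElem_inj_iff.mp h1; omega

theorem eq_of_reachable_deleteEdges (hT : T.IsTree) (hs : IsSpine T s) {x y : V} (hx : x ∈ s)
    (hy : y ∈ s) (hxy : (T.deleteEdges (spineEdges s)).Reachable x y) : x = y := by
  obtain ⟨i, hi, rfl⟩ := List.mem_iff_getElem.mp hx
  obtain ⟨j, hj, rfl⟩ := List.mem_iff_getElem.mp hy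
  have hcut : ∀ {a b : ℕ} (ha : a < s.length) (hb : b < s.length), a < b →
      ¬ (T.deleteEdges (spineEdges s)).Reachable s[a] s[b] := fun ha hb hab hr =>
    hs.not_reachable_deleteEdges hT hab hb (hr.mono (deleteEdges_anti (by
      simpa using mem_spineEdges_iff.mpr ⟨_, by omega, rfl⟩)))
  rcases lt_trichotomy i j with h | rfl | h
  · exact (hcut hi hj h hxy).elim
  · rfl
  · exact (hcut hj hi h hxy.symm).elim

theorem eq_iff_reachable_deleteEdges (hT : T.IsTree) (hs : IsSpine T s) {v r x : V}
    (hr : r ∈ s ∧ (T.deleteEdges (spineEdges s)).Reachable v r) (hx : x ∈ s) :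
    r = x ↔ (T.deleteEdges (spineEdges s)).Reachable v x :=
  ⟨fun h => h ▸ hr.2, fun h => hs.eq_of_reachable_deleteEdges hT hr.1 hx (hr.2.symm.trans h)⟩

theorem exists_reachable_deleteEdges (hT : T.IsTree) (hs : IsSpine T s) (v : V) :
    ∃ x ∈ s, (T.deleteEdges (spineEdges s)).Reachable v x := by
  obtain ⟨x, hx⟩ := List.exists_mem_of_ne_nil s hs.1
  obtain ⟨p⟩ := hT.connected.preconnected v x
  induction p with
  | nil => exact ⟨_, hx, .rfl⟩
  | @cons u w _ huw _ ih =>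
    by_cases hu : u ∈ s
    · exact ⟨u, hu, .rfl⟩
    obtain ⟨y, hy, hwy⟩ := ih hx
    have hD : (T.deleteEdges (spineEdges s)).Adj u w :=
      deleteEdges_adj.mpr ⟨huw, fun he => hu (mem_of_mem_spineEdges he (Sym2.mem_mk_left u w))⟩
    exact ⟨y, hy, hD.reachable.trans hwy⟩

theorem mem_spineEdges_or_mem_leafEdges (hT : T.IsTree) (hs : IsSpine T s) {e : Sym2 V}
    (he : e ∈ T.edgeSet) : e ∈ spineEdges s ∨ e ∈ leafEdges T := by
  induction e using Sym2.ind with | h u v => ?_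
  have hpos : ∀ {a b : V}, T.Adj a b → 0 < deg T a := fun h =>
    (Set.ncard_pos (Set.toFinite _)).mpr ⟨_, h⟩
  by_cases hu : deg T u = 1
  · exact Or.inr ⟨he, u, Sym2.mem_mk_left u v, hu⟩
  by_cases hv : deg T v = 1
  · exact Or.inr ⟨he, v, Sym2.mem_mk_right u v, hv⟩
  have huv : T.Adj u v := he
  obtain ⟨i, hi, rfl⟩ := List.mem_iff_getElem.mp ((hs.mem_iff u).mpr (by have := hpos huv; omega))
  obtain ⟨j, hj, rfl⟩ :=
    List.mem_iff_getElem.mp ((hs.mem_iff v).mpr (by have := hpos huv.symm; omega))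
  left
  rcases lt_trichotomy i j with h | rfl | h
  · obtain rfl := hs.eq_succ_of_adj_getElem hT h hj huv
    exact mem_spineEdges_iff.mpr ⟨i, hj, rfl⟩
  · exact (huv.ne rfl).elim
  · obtain rfl := hs.eq_succ_of_adj_getElem hT h hi huv.symm
    exact mem_spineEdges_iff.mpr ⟨j, hi, Sym2.eq_swap⟩

theorem subset_of_forall_spineEdges (hT : T.IsTree) (hs : IsSpine T s)
    {A A' : Finset (Sym2 V)} (hA : (A : Set (Sym2 V)) ⊆ T.edgeSet) (hleaf' : leafEdges T ⊆ A')
    (hspine : ∀ e ∈ spineEdges s, e ∈ A → e ∈ A') : A ⊆ A' := fun e he =>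
  (hs.mem_spineEdges_or_mem_leafEdges hT (hA he)).elim (fun hsp => hspine e hsp he)
    (fun hlf => hleaf' hlf)

end IsSpine

section Merging

variable {V : Type}

/-- The size of the leg of `x`; `catComp T s` is `s.map (legSize T s)` by definition. -/
noncomputable def legSize (T : SimpleGraph V) (s : List V) (x : V) : ℕ :=
  Nat.card ((T.deleteEdges (spineEdges s)).connectedComponentMk x).supp

theorem legSize_pos [Finite V] (T : SimpleGraph V) (s : List V) (x : V) : 0 < legSize T s x :=
  Nat.card_pos_iff.mpr ⟨⟨⟨x, rfl⟩⟩, inferInstance⟩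

variable [DecidableEq V]

def spineBlocks (s : List V) (A : Finset (Sym2 V)) : List (List V) :=
  s.splitBy fun x y => decide (s(x, y) ∈ A)

/-- The coarsening `α(A)` of `catComp T s`. -/
noncomputable def mergedComp (T : SimpleGraph V) (s : List V) (A : Finset (Sym2 V)) : List ℕ :=
  (spineBlocks s A).map fun q => (q.map (legSize T s)).sum

variable {T : SimpleGraph V} {s : List V} {A A' : Finset (Sym2 V)}

theorem flatten_spineBlocks (s : List V) (A : Finset (Sym2 V)) : (spineBlocks s A).flatten = s :=
  List.flatten_splitBy _ s

theorem mem_of_mem_spineBlocks {q : List V} (hq : q ∈ spineBlocks s A) {x : V} (hx : x ∈ q) :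
    x ∈ s :=
  flatten_spineBlocks s A ▸ List.mem_flatten.mpr ⟨q, hq, hx⟩

theorem root_mem_of_fromEdgeSet_adj [Fintype V] (hT : T.IsTree) (hs : IsSpine T s)
    (hA : (A : Set (Sym2 V)) ⊆ T.edgeSet) {ρ : V → V}
    (hρ : ∀ v, ρ v ∈ s ∧ (T.deleteEdges (spineEdges s)).Reachable v (ρ v))
    {q : List V} (hq : q ∈ spineBlocks s A) {a b : V}
    (hab : (fromEdgeSet (A : Set (Sym2 V))).Adj a b) (ha : ρ a ∈ q) : ρ b ∈ q := by
  have hroot : ∀ {w x}, x ∈ s → (T.deleteEdges (spineEdges s)).Reachable w x → ρ w = x :=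
    fun hx hwx => (hs.eq_iff_reachable_deleteEdges hT (hρ _) hx).mpr hwx
  have habA : s(a, b) ∈ A := ((fromEdgeSet_adj _).mp hab).1
  rcases hs.mem_spineEdges_or_mem_leafEdges hT (hA habA) with hsp | hlf
  · obtain ⟨i, hi, he⟩ := mem_spineEdges_iff.mp hsp
    obtain ⟨q', hq', hi', hi1'⟩ := List.exists_mem_splitBy_of_getElem
      (fun x y => decide (s(x, y) ∈ A)) hi (decide_eq_true (he ▸ habA))
    have hmem : ∀ x ∈ s(a, b), x ∈ q' ∧ ρ x = x := by
      rw [he]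
      intro x hx
      rcases Sym2.mem_iff.mp hx with rfl | rfl
      · exact ⟨hi', hroot (List.getElem_mem _) .rfl⟩
      · exact ⟨hi1', hroot (List.getElem_mem _) .rfl⟩
    obtain ⟨ha', hρa⟩ := hmem a (Sym2.mem_mk_left a b)
    obtain ⟨hb', hρb⟩ := hmem b (Sym2.mem_mk_right a b)
    have hqq' : q = q' := List.eq_of_mem_of_nodup_flatten
      ((flatten_spineBlocks s A).symm ▸ hs.nodup) hq hq' (hρa ▸ ha) ha'
    rwa [hqq', hρb]
  · have hD : (T.deleteEdges (spineEdges s)).Adj a b := deleteEdges_adj.mpr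
      ⟨hA habA, fun hsp => Set.disjoint_left.mp hs.disjoint_spineEdges_leafEdges hsp hlf⟩
    rwa [← hroot (hρ b).1 (hD.reachable.trans (hρ b).2)]

theorem reachable_fromEdgeSet_iff [Fintype V] (hT : T.IsTree) (hs : IsSpine T s)
    (hA : (A : Set (Sym2 V)) ⊆ T.edgeSet) (hleaf : leafEdges T ⊆ A) {ρ : V → V}
    (hρ : ∀ v, ρ v ∈ s ∧ (T.deleteEdges (spineEdges s)).Reachable v (ρ v)) {u v : V} :
    (fromEdgeSet (A : Set (Sym2 V))).Reachable u v ↔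
      ∃ q ∈ spineBlocks s A, ρ u ∈ q ∧ ρ v ∈ q := by
  constructor
  · rintro ⟨p⟩
    obtain ⟨q, hq, hu⟩ : ∃ q ∈ spineBlocks s A, ρ u ∈ q :=
      List.mem_flatten.mp ((flatten_spineBlocks s A).symm ▸ (hρ u).1)
    refine ⟨q, hq, hu, ?_⟩
    induction p with
    | nil => exact hu
    | cons hab _ ih => exact ih (root_mem_of_fromEdgeSet_adj hT hs hA hρ hq hab hu)
  · rintro ⟨q, hq, hu, hv⟩
    have hDH : T.deleteEdges (spineEdges s) ≤ fromEdgeSet (A : Set (Sym2 V)) := fun a b hab =>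
      (fromEdgeSet_adj _).mpr ⟨hleaf ((hs.mem_spineEdges_or_mem_leafEdges hT
        (deleteEdges_adj.mp hab).1).resolve_left (deleteEdges_adj.mp hab).2), hab.ne⟩
    have hchain : q.IsChain (fromEdgeSet (A : Set (Sym2 V))).Adj :=
      (List.isChain_of_mem_splitBy hq).imp fun x y hxy => by
        have hxyA : s(x, y) ∈ A := by simpa using hxy
        exact (fromEdgeSet_adj _).mpr ⟨hxyA, T.ne_of_adj (hA hxyA)⟩
    exact ((hρ u).2.mono hDH).trans
      ((reachable_of_isChain_adj hchain hu hv).trans ((hρ v).2.mono hDH).symm)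

theorem compPartition_fromEdgeSet [Fintype V] (hT : T.IsTree) (hs : IsSpine T s)
    (hA : (A : Set (Sym2 V)) ⊆ T.edgeSet) (hleaf : leafEdges T ⊆ A) :
    compPartition (fromEdgeSet (A : Set (Sym2 V))) = (mergedComp T s A : Multiset ℕ) := by
  choose ρ hρ using hs.exists_reachable_deleteEdges hT
  have hroot : ∀ {v x}, x ∈ s → (ρ v = x ↔ (T.deleteEdges (spineEdges s)).Reachable v x) :=
    fun hx => hs.eq_iff_reachable_deleteEdges hT (hρ _) hx
  have hhit : ∀ q ∈ spineBlocks s A, ∃ v, ρ v ∈ q := fun q hq => by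
    obtain ⟨x, hx⟩ := List.exists_mem_of_ne_nil q (List.ne_nil_of_mem_splitBy hq)
    exact ⟨x, by rwa [(hroot (mem_of_mem_spineBlocks hq hx)).mpr .rfl]⟩
  have hnd : (spineBlocks s A).flatten.Nodup := (flatten_spineBlocks s A).symm ▸ hs.nodup
  rw [compPartition_eq_map_of_reachable_iff hnd ρ
    (fun v => (flatten_spineBlocks s A).symm ▸ (hρ v).1) hhit
    (fun u v => reachable_fromEdgeSet_iff hT hs hA hleaf hρ), mergedComp]
  refine congrArg _ (List.map_congr_left fun q hq => ?_)
  rw [Nat.card_subtype_mem_eq_sum ρ ((List.nodup_flatten.mp hnd).1 q hq)]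
  refine congrArg List.sum (List.map_congr_left fun x hx => ?_)
  refine Nat.card_congr (Equiv.subtypeEquivRight fun v => ?_)
  rw [hroot (mem_of_mem_spineBlocks hq hx), ConnectedComponent.mem_supp_iff,
    ConnectedComponent.eq]

theorem coarsens_mergedComp [Fintype V] : Coarsens (mergedComp T s A) (catComp T s) :=
  ⟨(spineBlocks s A).map (List.map (legSize T s)),
    by rw [← List.map_flatten, flatten_spineBlocks]; rfl,
    fun p hp => by
      obtain ⟨q, hq, rfl⟩ := List.mem_map.mp hp
      simpa using List.ne_nil_of_mem_splitBy hq,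
    by simp [mergedComp, Function.comp_def]⟩

theorem spineBlocks_eq_of_mergedComp_eq [Finite V] (h : mergedComp T s A = mergedComp T s A') :
    spineBlocks s A = spineBlocks s A' := by
  have hsizes : (spineBlocks s A).map (List.map (legSize T s)) =
      (spineBlocks s A').map (List.map (legSize T s)) := by
    refine List.eq_of_map_sum_eq (by simp [← List.map_flatten, flatten_spineBlocks])
      (by simp [← List.map_flatten, flatten_spineBlocks, legSize_pos])
      (by simpa [mergedComp, Function.comp_def] using h)
  refine List.eq_iff_flatten_eq.mpr ⟨by rw [flatten_spineBlocks, flatten_spineBlocks], ?_⟩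
  simpa [Function.comp_def] using congrArg (List.map List.length) hsizes

theorem eq_of_spineBlocks_eq [Fintype V] (hT : T.IsTree) (hs : IsSpine T s)
    (hA : (A : Set (Sym2 V)) ⊆ T.edgeSet) (hleaf : leafEdges T ⊆ A)
    (hA' : (A' : Set (Sym2 V)) ⊆ T.edgeSet) (hleaf' : leafEdges T ⊆ A')
    (h : spineBlocks s A = spineBlocks s A') : A = A' := by
  have hchain := List.isChain_iff_getElem.mp (List.splitBy_eq_splitBy_iff.mp h)
  have hspine : ∀ e ∈ spineEdges s, e ∈ A ↔ e ∈ A' := by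
    intro e he
    obtain ⟨i, hi, rfl⟩ := mem_spineEdges_iff.mp he
    simpa using hchain i hi
  exact subset_antisymm
    (hs.subset_of_forall_spineEdges hT hA hleaf' fun e he => (hspine e he).mp)
    (hs.subset_of_forall_spineEdges hT hA' hleaf fun e he => (hspine e he).mpr)

theorem exists_mergedComp_eq [Fintype V] (hs : IsSpine T s) {α : List ℕ}
    (hα : Coarsens α (catComp T s)) :
    ∃ A : Finset (Sym2 V), (A : Set (Sym2 V)) ⊆ T.edgeSet ∧ leafEdges T ⊆ A ∧
      mergedComp T s A = α := by
  obtain ⟨P, hP, hPne, rfl⟩ := hα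
  obtain ⟨Q, rfl, rfl⟩ := List.exists_flatten_eq_of_flatten_eq_map (legSize T s) hP
  have hQ : [] ∉ Q := fun h => hPne [] (List.mem_map.mpr ⟨[], h, rfl⟩) rfl
  let A : Finset (Sym2 V) := (Set.toFinite {e | e ∈ T.edgeSet ∧
    (e ∈ leafEdges T ∨ ∃ q ∈ Q, ∀ x ∈ e, x ∈ q)}).toFinset
  have hmemA : ∀ e, e ∈ A ↔
      e ∈ T.edgeSet ∧ (e ∈ leafEdges T ∨ ∃ q ∈ Q, ∀ x ∈ e, x ∈ q) :=
    fun e => Set.Finite.mem_toFinset _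
  have hblocks : spineBlocks Q.flatten A = Q := by
    refine (List.splitBy_eq_splitBy_iff.mpr (List.isChain_iff_getElem.mpr fun i hi => ?_)).trans
      (List.splitBy_flatten_of_nodup hQ hs.nodup)
    have hsp : s(Q.flatten[i], Q.flatten[i + 1]) ∈ spineEdges Q.flatten :=
      mem_spineEdges_iff.mpr ⟨i, hi, rfl⟩
    have hnotleaf := Set.disjoint_left.mp hs.disjoint_spineEdges_leafEdges hsp
    simp [hmemA, hs.spineEdges_subset_edgeSet hsp, hnotleaf]
  refine ⟨A, fun e he => ((hmemA e).mp he).1,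
    fun e he => (hmemA e).mpr ⟨he.1, Or.inl he⟩, ?_⟩
  simp [mergedComp, hblocks, Function.comp_def]

end Merging

theorem edgeSets_equiv_coarsenings_general {V : Type} [Fintype V] (β : List ℕ)
    (T : SimpleGraph V) (hT : IsProperCaterpillar T)
    (s : List V) (hs : IsSpine T s) (hc : catComp T s = β) :
    ∃ e : {A : Finset (Sym2 V) //
            (↑A : Set (Sym2 V)) ⊆ T.edgeSet ∧ leafEdges T ⊆ (↑A : Set (Sym2 V))} ≃
          {α : List ℕ // Coarsens α β},
      ∀ A, compPartition (SimpleGraph.fromEdgeSet (↑A.val : Set (Sym2 V)))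
            = ((e A).val : Multiset ℕ) := by
  classical
  subst hc
  refine ⟨Equiv.ofBijective (fun A => ⟨mergedComp T s A.1, coarsens_mergedComp⟩) ⟨?_, ?_⟩,
    fun A => compPartition_fromEdgeSet hT.1 hs A.2.1 A.2.2⟩
  · rintro ⟨A, hA, hleaf⟩ ⟨A', hA', hleaf'⟩ h
    exact Subtype.ext <| eq_of_spineBlocks_eq hT.1 hs hA hleaf hA' hleaf' <|
      spineBlocks_eq_of_mergedComp_eq (congrArg Subtype.val h)
  · rintro ⟨α, hα⟩
    obtain ⟨A, hA, hleaf, rfl⟩ := exists_mergedComp_eq hs hα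
    exact ⟨⟨A, hA, hleaf⟩, rfl⟩

/-- For a proper caterpillar `T` with composition `β` (i.e.
`T = Ψ(β)`, `β` having all components ≥ 2), the edge subsets containing all
leaf-edges are in bijection with the coarsenings of `β`, and the bijection
preserves the induced partition. -/
theorem edgeSets_equiv_coarsenings {V : Type} [Fintype V] (β : List ℕ)
    (hβ : ∀ x ∈ β, 2 ≤ x) (hβne : β ≠ [])
    (T : SimpleGraph V) (hT : IsProperCaterpillar T)
    (s : List V) (hs : IsSpine T s) (hc : catComp T s = β) :
    ∃ e : {A : Finset (Sym2 V) //
            (↑A : Set (Sym2 V)) ⊆ T.edgeSet ∧ leafEdges T ⊆ (↑A : Set (Sym2 V))} ≃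
          {α : List ℕ // Coarsens α β},
      ∀ A, compPartition (SimpleGraph.fromEdgeSet (↑A.val : Set (Sym2 V)))
            = ((e A).val : Multiset ℕ) :=
  edgeSets_equiv_coarsenings_general β T hT s hs hc
end

section
/- The reverse operation on compositions commutes with the composition product: reverse(β∘α) = reverse(β)∘reverse(α). -/
/-! Near-concatenation is associative and reverses contravariantly,
`reverse (α ⊙ β) = reverse β ⊙ reverse α`. Associativity makes `α` commute with its own powers,
so `reverse (α^{⊙n}) = (reverse α)^{⊙n}`; and reversing a concatenation of blocks reverses both
the order of the blocks and each block. -/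

@[simp]
lemma odot_nil_right : ∀ α : List ℕ, odot α [] = α
  | [] => rfl
  | [_] => rfl
  | a :: b :: as => by rw [odot, odot_nil_right (b :: as)]

lemma odot_cons_of_ne_nil (a : ℕ) {as : List ℕ} (h : as ≠ []) (β : List ℕ) :
    odot (a :: as) β = a :: odot as β := by
  obtain ⟨b, bs, rfl⟩ := List.exists_cons_of_ne_nil h
  rfl

lemma odot_ne_nil {α : List ℕ} (h : α ≠ []) (β : List ℕ) : odot α β ≠ [] := by
  match α, β with
  | [a], [] => simp
  | [a], b :: bs => simp [odot]
  | a :: b :: as, β => simp [odot]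

lemma odot_append_of_ne_nil : ∀ (α : List ℕ) {β : List ℕ}, β ≠ [] → ∀ γ : List ℕ,
    odot α (β ++ γ) = odot α β ++ γ
  | [], _, _, _ => rfl
  | [_], _ :: _, _, _ => rfl
  | a :: b :: as, β, h, γ => by
    simp only [odot, odot_append_of_ne_nil (b :: as) h γ, List.cons_append]

lemma odot_append_singleton_cons : ∀ (l : List ℕ) (x y : ℕ) (ys : List ℕ),
    odot (l ++ [x]) (y :: ys) = l ++ (x + y) :: ys
  | [], _, _, _ => rfl
  | a :: l, x, y, ys => by
    rw [List.cons_append, odot_cons_of_ne_nil a (by simp), odot_append_singleton_cons l x y ys,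
      List.cons_append]

lemma reverse_odot : ∀ α β : List ℕ, (odot α β).reverse = odot β.reverse α.reverse
  | [], β => by simp [odot]
  | [a], [] => rfl
  | [a], b :: bs => by
    rw [odot, List.reverse_cons, List.reverse_cons, List.reverse_singleton,
      odot_append_singleton_cons, Nat.add_comm]
  | a :: b :: as, β => by
    rw [odot, List.reverse_cons, reverse_odot (b :: as) β,
      ← odot_append_of_ne_nil _ (by simp), ← List.reverse_cons]

lemma odot_assoc : ∀ α β γ : List ℕ, odot (odot α β) γ = odot α (odot β γ)
  | [], _, _ => rfl
  | [_], [], _ => by simp [odot]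
  | [_], [_], [] => rfl
  | [_], [_], _ :: _ => by simp [odot, Nat.add_assoc]
  | [_], _ :: w :: ws, γ => by
    simp only [odot, odot_cons_of_ne_nil _ (List.cons_ne_nil w ws)]
  | a :: b :: as, β, γ => by
    rw [odot_cons_of_ne_nil a (List.cons_ne_nil b as),
      odot_cons_of_ne_nil a (odot_ne_nil (List.cons_ne_nil b as) β), odot_assoc (b :: as) β γ,
      ← odot_cons_of_ne_nil a (List.cons_ne_nil b as)]

lemma odot_odotPow_comm (α : List ℕ) : ∀ n, odot α (odotPow α n) = odot (odotPow α n) α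
  | 0 => by simp [odotPow, odot]
  | n + 1 => by rw [odotPow, ← odot_assoc, odot_odotPow_comm α n]

lemma reverse_odotPow (α : List ℕ) : ∀ n, (odotPow α n).reverse = odotPow α.reverse n
  | 0 => rfl
  | n + 1 => by rw [odotPow, reverse_odot, reverse_odotPow α n, odot_odotPow_comm, odotPow]

theorem reverse_circ_general (β α : List ℕ) :
    (circ β α).reverse = circ β.reverse α.reverse := by
  simp only [circ, List.reverse_flatten, List.map_reverse, List.map_map, Function.comp_def,
    reverse_odotPow]

/-- The reverse operation commutes with the composition
product: `reverse (β ∘ α) = reverse β ∘ reverse α`. -/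
theorem reverse_circ (β α : List ℕ) (hβ : IsComposition β) (hα : IsComposition α) :
    (circ β α).reverse = circ β.reverse α.reverse :=
  reverse_circ_general β α
end

section
/- If β is a palindromic composition, then any composition α with the same L-polynomial as β (equivalently, the same multiset of partition coarsenings) equals β or its reverse; i.e., palindromes are L-unique. -/
/-!
Comparing the finest coarsening `β` with the others shows that `Lpoly` determines the sum and
the length of a composition. A two-block coarsening `{t, n - t}` of a composition of `n` records
that `t` or `n - t` is a partial sum of it; for a palindrome both are, so every partial sum of `α`
is a partial sum of `β`. Having the same length, `α` and `β` have equally many partial sums, hence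
the same ones, and a composition is determined by its set of partial sums.
-/

theorem mem_splits {l : List ℕ} {P : List (List ℕ)} :
    P ∈ splits l ↔ P.flatten = l ∧ ∀ p ∈ P, p ≠ [] := by
  induction l generalizing P with
  | nil =>
    simp only [splits, List.mem_singleton, List.flatten_eq_nil_iff]
    constructor
    · rintro rfl; simp
    · rintro ⟨h1, h2⟩
      exact List.eq_nil_iff_forall_not_mem.2 fun p hp => h2 p hp (h1 p hp)
  | cons a rest ih =>
    simp only [splits, List.mem_flatMap, ih]
    constructor
    · rintro ⟨s, ⟨rfl, hs⟩, hP⟩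
      rcases s with _ | ⟨b, bs⟩
      · simp_all
      · simp only [List.mem_cons, List.not_mem_nil, or_false] at hP
        rcases hP with rfl | rfl <;> simp_all
    · rintro ⟨hflat, hne⟩
      obtain _ | ⟨_ | ⟨x, xs⟩, ps⟩ := P
      · simp at hflat
      · simp at hne
      obtain ⟨rfl, rfl⟩ : x = a ∧ xs ++ ps.flatten = rest := by simpa using hflat
      rcases xs with _ | ⟨y, ys⟩
      · rcases ps with _ | ⟨b, bs⟩
        · exact ⟨[], by simp⟩
        · exact ⟨b :: bs, by simp_all⟩
      · exact ⟨(y :: ys) :: ps, by simp_all⟩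

theorem mem_Lpoly {β : List ℕ} {m : Multiset ℕ} :
    m ∈ Lpoly β ↔ ∃ α, Coarsens α β ∧ (α : Multiset ℕ) = m := by
  simp [Lpoly, coarsenings, Coarsens, mem_splits, and_assoc, eq_comm]

namespace Coarsens

variable {α β : List ℕ}

theorem refl (β : List ℕ) : Coarsens β β := by
  refine ⟨β.map fun x => [x], ?_, by simp, by simp [Function.comp_def]⟩
  induction β <;> simp_all

theorem sum_eq (h : Coarsens α β) : α.sum = β.sum := by
  obtain ⟨P, rfl, -, rfl⟩ := h
  exact List.sum_flatten.symm

theorem length_le (h : Coarsens α β) : α.length ≤ β.length := by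
  obtain ⟨P, rfl, hne, rfl⟩ := h
  rw [List.length_map, List.length_flatten]
  simpa using List.length_le_sum_of_one_le (P.map List.length) fun n hn => by
    obtain ⟨p, hp, rfl⟩ := List.mem_map.1 hn
    exact List.length_pos_iff.2 (hne p hp)

theorem reverse (h : Coarsens α β) : Coarsens α.reverse β.reverse := by
  obtain ⟨P, rfl, hne, rfl⟩ := h
  refine ⟨(P.map List.reverse).reverse, List.reverse_flatten.symm, ?_, ?_⟩
  · intro p hp
    obtain ⟨q, hq, rfl⟩ := List.mem_map.1 (List.mem_reverse.1 hp)
    simpa using hne q hq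
  · simp [List.map_reverse]

theorem pair_iff {a b : ℕ} :
    Coarsens [a, b] β ↔ ∃ p q, p ≠ [] ∧ q ≠ [] ∧ p ++ q = β ∧ p.sum = a ∧ q.sum = b := by
  constructor
  · rintro ⟨P, rfl, hne, hP⟩
    obtain ⟨p, q, rfl⟩ := List.length_eq_two.1 (by simpa using congrArg List.length hP.symm)
    simp only [List.mem_cons, List.not_mem_nil, or_false, forall_eq_or_imp, forall_eq,
      List.map_cons, List.map_nil, List.cons.injEq, and_true] at hne hP
    exact ⟨p, q, hne.1, hne.2, by simp, hP.1.symm, hP.2.symm⟩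
  · rintro ⟨p, q, hp, hq, rfl, rfl, rfl⟩
    exact ⟨[p, q], by simp, by simp [hp, hq], rfl⟩

theorem take_drop {i : ℕ} (h0 : 0 < i) (hi : i < β.length) :
    Coarsens [(β.take i).sum, (β.drop i).sum] β :=
  pair_iff.2 ⟨_, _, List.ne_nil_of_length_pos (by simp; omega), by simpa using hi,
    List.take_append_drop i β, rfl, rfl⟩

end Coarsens

theorem coe_mem_Lpoly_of_coarsens {α β : List ℕ} (h : Coarsens α β) :
    (α : Multiset ℕ) ∈ Lpoly β :=
  mem_Lpoly.2 ⟨α, h, rfl⟩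

theorem coe_mem_Lpoly_self (β : List ℕ) : (β : Multiset ℕ) ∈ Lpoly β :=
  coe_mem_Lpoly_of_coarsens (Coarsens.refl β)

theorem sum_eq_of_mem_Lpoly {β : List ℕ} {m : Multiset ℕ} (h : m ∈ Lpoly β) : m.sum = β.sum := by
  obtain ⟨α, hα, rfl⟩ := mem_Lpoly.1 h
  simpa using hα.sum_eq

theorem card_le_of_mem_Lpoly {β : List ℕ} {m : Multiset ℕ} (h : m ∈ Lpoly β) :
    Multiset.card m ≤ β.length := by
  obtain ⟨α, hα, rfl⟩ := mem_Lpoly.1 h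
  simpa using hα.length_le

theorem sum_eq_of_Lpoly_eq {α β : List ℕ} (h : Lpoly α = Lpoly β) : α.sum = β.sum := by
  have hα := coe_mem_Lpoly_self α
  rw [h] at hα
  simpa using sum_eq_of_mem_Lpoly hα

theorem length_le_of_Lpoly_eq {α β : List ℕ} (h : Lpoly α = Lpoly β) : α.length ≤ β.length := by
  have hα := coe_mem_Lpoly_self α
  rw [h] at hα
  simpa using card_le_of_mem_Lpoly hα

theorem length_eq_of_Lpoly_eq {α β : List ℕ} (h : Lpoly α = Lpoly β) : α.length = β.length :=
  (length_le_of_Lpoly_eq h).antisymm (length_le_of_Lpoly_eq h.symm)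

theorem coarsens_pair_of_mem_Lpoly {β : List ℕ} (hβ : β.reverse = β) {a b : ℕ}
    (h : ([a, b] : Multiset ℕ) ∈ Lpoly β) : Coarsens [a, b] β := by
  obtain ⟨α, hα, hperm⟩ := mem_Lpoly.1 h
  rcases List.perm_pair.1 (Multiset.coe_eq_coe.1 hperm) with rfl | rfl
  · exact hα
  · simpa [hβ] using hα.reverse

namespace Composition

variable {n : ℕ}

theorem mem_boundaries_iff {c : Composition n} {j : Fin (n + 1)} :
    j ∈ c.boundaries ↔ ∃ i, c.sizeUpTo i = j := by
  simp only [boundaries, Finset.mem_map, Finset.mem_univ, true_and]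
  constructor
  · rintro ⟨i, rfl⟩
    exact ⟨i, rfl⟩
  · rintro ⟨i, hi⟩
    rcases le_or_gt c.length i with hle | hlt
    · exact ⟨Fin.last _, by ext; simp [← hi, sizeUpTo_ofLength_le _ _ hle]⟩
    · exact ⟨⟨i, by omega⟩, Fin.ext hi⟩

theorem eq_of_boundaries_subset {c c' : Composition n} (h : c.boundaries ⊆ c'.boundaries)
    (hlen : c.length = c'.length) : c = c' := by
  have hb : c.boundaries = c'.boundaries := Finset.eq_of_subset_of_card_le h <| by
    rw [card_boundaries_eq_succ_length, card_boundaries_eq_succ_length, hlen]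
  exact (compositionEquiv n).injective (CompositionAsSet.ext hb)

theorem boundaries_subset_of_Lpoly_eq {c c' : Composition n}
    (hpal : c'.blocks.reverse = c'.blocks) (h : Lpoly c.blocks = Lpoly c'.blocks) :
    c.boundaries ⊆ c'.boundaries := by
  intro j hj
  obtain ⟨i, hi⟩ := mem_boundaries_iff.1 hj
  rw [mem_boundaries_iff]
  rcases Nat.eq_zero_or_pos i with rfl | hi0
  · exact ⟨0, by simp [← hi]⟩
  rcases le_or_gt c.length i with hle | hlt
  · exact ⟨c'.length, by rw [sizeUpTo_length, ← hi, sizeUpTo_ofLength_le _ _ hle]⟩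
  have hcut := coe_mem_Lpoly_of_coarsens (Coarsens.take_drop hi0 hlt)
  rw [h] at hcut
  obtain ⟨p, q, -, -, hpq, hp, -⟩ := Coarsens.pair_iff.1 (coarsens_pair_of_mem_Lpoly hpal hcut)
  exact ⟨p.length, by rw [← hi, sizeUpTo, ← hpq, List.take_left, hp]; rfl⟩

end Composition

/-- Palindromic compositions are L-unique: any composition
with the same L-polynomial as a palindrome `β` equals `β` or its reverse. -/
theorem palindrome_L_unique (β α : List ℕ) (hβ : IsComposition β)
    (hα : IsComposition α) (hpal : β.reverse = β) (h : Lpoly α = Lpoly β) :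
    α = β ∨ α = β.reverse := by
  let cα : Composition β.sum := ⟨α, hα.2 _, sum_eq_of_Lpoly_eq h⟩
  let cβ : Composition β.sum := ⟨β, hβ.2 _, rfl⟩
  have hc : cα = cβ := Composition.eq_of_boundaries_subset
    (Composition.boundaries_subset_of_Lpoly_eq hpal h) (length_eq_of_Lpoly_eq h)
  exact .inl congr(Composition.blocks $hc)
end

section
/- If a composition γ is strictly lexicographically smaller than its reverse, and b = γ_1 + … + γ_l where l is the first index at which γ and its reverse differ, then the coefficient of x_b x_{|γ|−b} in L(γ, x) equals 1; in particular (|γ|−b, b) is not a coarsening of γ. -/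
section Aux

/-- Soundness of `splits`. -/
lemma splits_sound : ∀ (γ : List ℕ), ∀ P ∈ splits γ, P.flatten = γ ∧ ∀ p ∈ P, p ≠ []
  | [] => by
    intro P hP
    simp only [splits, List.mem_singleton] at hP
    subst hP; simp
  | a :: rest => by
    intro P hP
    simp only [splits, List.mem_flatMap] at hP
    obtain ⟨s, hs, hPs⟩ := hP
    obtain ⟨hflat, hne⟩ := splits_sound rest s hs
    cases s with
    | nil =>
      simp only [List.mem_singleton] at hPs
      subst hPs
      simp only [List.flatten] at hflat ⊢
      simp at hflat
      constructor
      · simp [← hflat]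
      · intro p hp; simp at hp; subst hp; simp
    | cons c cs =>
      simp only [List.mem_cons, List.mem_singleton, List.not_mem_nil, or_false] at hPs
      simp only [List.flatten_cons] at hflat
      rcases hPs with rfl | rfl
      · constructor
        · simp [← hflat]
        · intro p hp
          rcases List.mem_cons.1 hp with rfl | hp
          · simp
          · exact hne p (List.mem_cons_of_mem _ hp)
      · constructor
        · simp [← hflat]
        · intro p hp
          rcases List.mem_cons.1 hp with rfl | hp
          · simp
          · exact hne p hp

/-- Completeness of `splits`. -/
lemma splits_complete : ∀ (γ : List ℕ) (P : List (List ℕ)),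
    P.flatten = γ → (∀ p ∈ P, p ≠ []) → P ∈ splits γ
  | [], P, hf, hne => by
    cases P with
    | nil => simp [splits]
    | cons p ps =>
      exfalso
      simp only [List.flatten_cons] at hf
      exact hne p (by simp) (List.append_eq_nil_iff.1 hf).1
  | a :: rest, P, hf, hne => by
    cases P with
    | nil => simp at hf
    | cons p ps =>
      obtain ⟨p0, p', rfl⟩ : ∃ p0 p', p = p0 :: p' := by
        cases p with
        | nil => exact absurd rfl (hne _ (by simp))
        | cons x xs => exact ⟨x, xs, rfl⟩
      simp only [List.flatten_cons, List.cons_append, List.cons.injEq] at hf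
      obtain ⟨rfl, hrest⟩ := hf
      simp only [splits, List.mem_flatMap]
      cases p' with
      | nil =>
        simp only [List.nil_append] at hrest
        have hmem : ps ∈ splits rest :=
          splits_complete rest ps hrest (fun q hq => hne q (List.mem_cons_of_mem _ hq))
        cases ps with
        | nil => exact ⟨[], hmem, by simp⟩
        | cons c cs => exact ⟨c :: cs, hmem, by simp⟩
      | cons x xs =>
        have hmem : (x :: xs) :: ps ∈ splits rest := by
          apply splits_complete rest _ (by simpa using hrest)
          intro q hq
          rcases List.mem_cons.1 hq with rfl | hq
          · simp
          · exact hne q (List.mem_cons_of_mem _ hq)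
        exact ⟨(x :: xs) :: ps, hmem, by simp⟩

/-- Recovering the tail split. -/
def recov : List (List ℕ) → List (List ℕ)
  | [] => []
  | p :: ps => if p.tail = [] then ps else p.tail :: ps

lemma splits_nodup : ∀ (γ : List ℕ), (splits γ).Nodup
  | [] => by simp [splits]
  | a :: rest => by
    have ih := splits_nodup rest
    simp only [splits]
    rw [List.nodup_flatMap]
    constructor
    · intro s hs
      cases s with
      | nil => simp
      | cons c cs =>
        have hc : c ≠ [] := (splits_sound rest _ hs).2 c (by simp)
        have hne2 : (a :: c) :: cs ≠ [a] :: c :: cs := by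
          cases c with
          | nil => exact absurd rfl hc
          | cons y ys => intro h; simp at h
        simp [List.nodup_cons, hne2]
    · have hrec : ∀ s ∈ splits rest, ∀ P ∈ (match s with
        | [] => [[[a]]]
        | b :: bs => [(a :: b) :: bs, [a] :: b :: bs]), recov P = s := by
        intro s hs P hP
        cases s with
        | nil =>
          simp only [List.mem_singleton] at hP
          subst hP; simp [recov]
        | cons c cs =>
          have hc : c ≠ [] := (splits_sound rest _ hs).2 c (by simp)
          simp only [List.mem_cons, List.mem_singleton, List.not_mem_nil, or_false] at hP
          rcases hP with rfl | rfl
          · simp [recov, hc]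
          · simp [recov]
      refine List.Pairwise.imp_of_mem ?_ ih
      intro s t hs ht hst
      intro P hPs hPt
      exact hst ((hrec s hs P hPs).symm.trans (hrec t ht P hPt))

lemma flatMap_single {α β : Type*} (f : α → β) :
    ∀ (l : List α), (l.flatMap fun a => [f a]) = l.map f
  | [] => rfl
  | a :: t => by
    rw [List.flatMap_cons, flatMap_single f t, List.map_cons]
    rfl

lemma sum_pos_of_ne_nil {l : List ℕ} (h : l ≠ []) (hp : ∀ x ∈ l, 0 < x) : 0 < l.sum := by
  cases l with
  | nil => exact absurd rfl h
  | cons x xs =>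
    have : 0 < x := hp x (by simp)
    simp only [List.sum_cons]
    omega

lemma filter_eq_single {α : Type*} [DecidableEq α] (L : List α) (hn : L.Nodup) (p : α → Bool)
    (T : α) (hT : T ∈ L) (hpT : p T) (huniq : ∀ x ∈ L, p x → x = T) :
    L.filter p = [T] := by
  have h2 : T ∈ L.filter p := List.mem_filter.2 ⟨hT, hpT⟩
  have h1 : ∀ x ∈ L.filter p, x = T := fun x hx =>
    huniq x (List.mem_filter.1 hx).1 (List.mem_filter.1 hx).2
  have hfn : (L.filter p).Nodup := hn.filter p
  cases hF : L.filter p with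
  | nil => rw [hF] at h2; simp at h2
  | cons y ys =>
    rw [hF] at h1 h2 hfn
    have hy : y = T := h1 y (by simp)
    cases ys with
    | nil => rw [hy]
    | cons z zs =>
      exfalso
      have hz : z = T := h1 z (by simp)
      rw [List.nodup_cons] at hfn
      exact hfn.1 (by simp [hy, hz])

lemma lex_get_lt : ∀ (l : ℕ) (x y : List ℕ) (h1 : l < x.length) (h2 : l < y.length),
    List.Lex (· < ·) x y → x.take l = y.take l →
    x.get ⟨l, h1⟩ ≠ y.get ⟨l, h2⟩ → x.get ⟨l, h1⟩ < y.get ⟨l, h2⟩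
  | 0, x, y, h1, h2 => by
    intro hlex _ hne
    cases hlex with
    | nil => simp at h1
    | cons h => simp at hne
    | rel h => simpa using h
  | l + 1, x, y, h1, h2 => by
    intro hlex htake hne
    cases hlex with
    | nil => simp at h1
    | @cons a x' y' h =>
      have htake' : x'.take l = y'.take l := by
        simpa using htake
      exact lex_get_lt l x' y' (by simpa using h1) (by simpa using h2) h htake'
        (by simpa using hne)
    | @rel a x' b y' h =>
      exfalso
      have : a = b := by simpa using congrArg (fun t => t.head?) htake
      omega

end Aux

/-- If `γ` is lexicographically smaller than its reverse and
`b` is the sum of the components of `γ` up to (and including) the first index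
where `γ` and its reverse differ, then the coefficient of `x_b x_{|γ|-b}` in
`L(γ)` is `1`; in particular `(|γ|-b, b)` is not a coarsening of `γ`. -/
theorem coeff_two_part_eq_one (γ : List ℕ) (hγ : IsComposition γ)
    (hlex : List.Lex (· < ·) γ γ.reverse)
    (l : ℕ) (hl : l < γ.length)
    (hpre : γ.take l = γ.reverse.take l)
    (hdiff : γ.get ⟨l, hl⟩ ≠ γ.reverse.get ⟨l, by simpa using hl⟩)
    (b : ℕ) (hb : b = (γ.take (l + 1)).sum) :
    Multiset.count ({b, γ.sum - b} : Multiset ℕ) (Lpoly γ) = 1 ∧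
      ¬ Coarsens [γ.sum - b, b] γ := by
  classical
  obtain ⟨hnil, hpos⟩ := hγ
  have hn1 : 1 ≤ γ.length := by
    cases γ with
    | nil => exact absurd rfl hnil
    | cons _ _ => simp
  have hrevlen : l < γ.reverse.length := by simpa using hl
  have hdiff' : γ[l]'hl ≠ γ[γ.length - 1 - l]'(by omega) := by
    simpa [List.get_eq_getElem, List.getElem_reverse] using hdiff
  have hprefix_get : ∀ j, j < l → γ[j]? = γ[γ.length - 1 - j]? := by
    intro j hj
    have h1 := congrArg (fun t => t[j]?) hpre
    simp only [List.getElem?_take, if_pos hj] at h1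
    rw [h1, List.getElem?_reverse (by omega)]
  -- Step 1 : `l` is strictly before the middle
  have hlm : l < γ.length - 1 - l := by
    rcases lt_trichotomy l (γ.length - 1 - l) with h | h | h
    · exact h
    · refine absurd ?_ hdiff'
      have h0 : γ[l]? = γ[γ.length - 1 - l]? := by rw [← h]
      rwa [List.getElem?_eq_getElem hl,
        List.getElem?_eq_getElem (show γ.length - 1 - l < γ.length by omega),
        Option.some_inj] at h0
    · exfalso
      have h2 := hprefix_get (γ.length - 1 - l) h
      have hidx : γ.length - 1 - (γ.length - 1 - l) = l := by omega
      rw [hidx] at h2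
      rw [List.getElem?_eq_getElem (show γ.length - 1 - l < γ.length by omega),
        List.getElem?_eq_getElem hl] at h2
      exact hdiff' (by simpa using h2.symm)
  -- Step 2 : strict inequality at the first difference
  have hlt : γ[l]'hl < γ[γ.length - 1 - l]'(by omega) := by
    have := lex_get_lt l γ γ.reverse hl hrevlen hlex hpre hdiff
    simpa [List.get_eq_getElem, List.getElem_reverse] using this
  -- prefix/suffix sum machinery
  have hSD : ∀ k, (γ.take k).sum + (γ.drop k).sum = γ.sum :=
    fun k => List.sum_take_add_sum_drop γ k
  have hSmono : ∀ i j, i < j → j ≤ γ.length → (γ.take i).sum < (γ.take j).sum := by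
    intro i j hij hj
    have h1 : γ.take j = γ.take i ++ (γ.drop i).take (j - i) := by
      rw [← List.take_add]; congr 1; omega
    rw [h1, List.sum_append]
    have hne : (γ.drop i).take (j - i) ≠ [] := by
      intro h
      have := congrArg List.length h
      simp at this
      omega
    have hp : 0 < ((γ.drop i).take (j - i)).sum :=
      sum_pos_of_ne_nil hne
        (fun x hx => hpos x (List.mem_of_mem_drop (List.mem_of_mem_take hx)))
    omega
  have hDmono : ∀ i j, i ≤ j → (γ.drop j).sum ≤ (γ.drop i).sum := by
    intro i j hij
    have h1 : γ.drop j = (γ.drop i).drop (j - i) := by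
      rw [List.drop_drop]; congr 1; omega
    rw [h1]
    have := List.sum_take_add_sum_drop (γ.drop i) (j - i)
    omega
  have hb' : b = (γ.take l).sum + γ[l]'hl := by
    have h1 : γ.take (l + 1) = γ.take l ++ [γ[l]'hl] := by
      rw [List.take_succ, List.getElem?_eq_getElem hl]; rfl
    rw [hb, h1, List.sum_append, List.sum_cons, List.sum_nil]
    omega
  have hDnl : (γ.drop (γ.length - l)).sum = (γ.take l).sum := by
    have h1 : (γ.reverse.take l).reverse = γ.drop (γ.length - l) := by
      rw [List.reverse_take]; simp
    calc (γ.drop (γ.length - l)).sum = ((γ.reverse.take l).reverse).sum := by rw [h1]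
      _ = (γ.reverse.take l).sum := List.sum_reverse _
      _ = (γ.take l).sum := by rw [← hpre]
  have hDnl1 : (γ.drop (γ.length - 1 - l)).sum
      = γ[γ.length - 1 - l]'(by omega) + (γ.take l).sum := by
    rw [List.drop_eq_getElem_cons (show γ.length - 1 - l < γ.length by omega)]
    simp only [List.sum_cons]
    have h2 : γ.length - 1 - l + 1 = γ.length - l := by omega
    rw [h2, hDnl]
  have hγl : 0 < γ[l]'hl := hpos _ (List.getElem_mem hl)
  -- no suffix of γ has sum b
  have hK : ∀ k, (γ.drop k).sum ≠ b := by
    intro k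
    rcases le_or_gt k (γ.length - 1 - l) with hk | hk
    · have h1 := hDmono k (γ.length - 1 - l) hk
      rw [hDnl1] at h1
      omega
    · have h1 := hDmono (γ.length - l) k (by omega)
      rw [hDnl] at h1
      omega
  have hSuniq : ∀ k, k ≤ γ.length → (γ.take k).sum = b → k = l + 1 := by
    intro k hk hSk
    by_contra hne
    rcases lt_or_gt_of_ne hne with h | h
    · have := hSmono k (l + 1) h (by omega)
      rw [hSk, ← hb] at this; omega
    · have := hSmono (l + 1) k h hk
      rw [hSk, ← hb] at this; omega
  have hble : b ≤ γ.sum := by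
    have := hSD (l + 1); omega
  have hDl1 : (γ.drop (l + 1)).sum = γ.sum - b := by
    have := hSD (l + 1); omega
  -- the unique two-block split
  have hT1 : γ.take (l + 1) ≠ [] := by
    intro h
    have h2 := congrArg List.length h
    rw [List.length_take] at h2
    simp only [List.length_nil] at h2
    omega
  have hT2 : γ.drop (l + 1) ≠ [] := by
    intro h
    have h2 := congrArg List.length h
    rw [List.length_drop] at h2
    simp only [List.length_nil] at h2
    omega
  have hTmem : [γ.take (l + 1), γ.drop (l + 1)] ∈ splits γ := by
    apply splits_complete
    · simp only [List.flatten_cons, List.flatten_nil, List.append_nil]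
      exact List.take_append_drop _ _
    · intro p hp
      simp only [List.mem_cons, List.not_mem_nil, or_false, List.mem_singleton] at hp
      rcases hp with rfl | rfl
      · exact hT1
      · exact hT2
  have hTval : (([γ.take (l + 1), γ.drop (l + 1)].map List.sum : List ℕ) : Multiset ℕ)
      = ({b, γ.sum - b} : Multiset ℕ) := by
    simp only [List.map_cons, List.map_nil, ← hb, hDl1]
    simp [Multiset.insert_eq_cons, ← Multiset.cons_coe]
  have huniq : ∀ P ∈ splits γ,
      ((P.map List.sum : List ℕ) : Multiset ℕ) = ({b, γ.sum - b} : Multiset ℕ) → P = [γ.take (l + 1), γ.drop (l + 1)] := by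
    intro P hP hval
    obtain ⟨hflat, hneP⟩ := splits_sound γ P hP
    have hlen : P.length = 2 := by
      have := congrArg Multiset.card hval
      simpa using this
    obtain ⟨p, q, rfl⟩ : ∃ p q, P = [p, q] := by
      match P, hlen with
      | [p, q], _ => exact ⟨p, q, rfl⟩
    have hpq : p ++ q = γ := by simpa using hflat
    have hqd : q = γ.drop p.length := by rw [← hpq, List.drop_left]
    have hpt : p = γ.take p.length := by rw [← hpq, List.take_left]
    have hmem : b = p.sum ∨ b = q.sum := by
      have : b ∈ (([p, q].map List.sum : List ℕ) : Multiset ℕ) := by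
        rw [hval]; simp
      simpa using this
    have hqb : q.sum ≠ b := by
      rw [hqd]; exact hK p.length
    have hpb : p.sum = b := by
      rcases hmem with h | h
      · exact h.symm
      · exact absurd h.symm hqb
    have hplen : p.length ≤ γ.length := by
      rw [← hpq]; simp
    have hpl : p.length = l + 1 := hSuniq p.length hplen (by rw [← hpt]; exact hpb)
    rw [hpt, hqd, hpl]
  refine ⟨?_, ?_⟩
  · have hL : Lpoly γ = Multiset.map
        (fun P : List (List ℕ) => ((P.map List.sum : List ℕ) : Multiset ℕ)) ↑(splits γ) := by
      rw [Multiset.map_coe]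
      unfold Lpoly coarsenings
      simp [List.map_map, flatMap_single]
      exact List.Perm.refl _
    rw [hL, Multiset.count_map, Multiset.filter_coe]
    have hfil : (splits γ).filter
        (fun a => decide (({b, γ.sum - b} : Multiset ℕ) = ((a.map List.sum : List ℕ) : Multiset ℕ)))
        = [[γ.take (l + 1), γ.drop (l + 1)]] := by
      apply filter_eq_single _ (splits_nodup γ) _ _ hTmem
      · simp only [decide_eq_true_eq]
        exact hTval.symm
      · intro x hx hpx
        have hpx' : ({b, γ.sum - b} : Multiset ℕ) = ((x.map List.sum : List ℕ) : Multiset ℕ) := by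
          simpa using hpx
        exact huniq x hx hpx'.symm
    rw [hfil]
    simp
  · rintro ⟨P, hflat, hneP, hmap⟩
    have hlen : P.length = 2 := by
      have := congrArg List.length hmap
      simpa using this.symm
    obtain ⟨p, q, rfl⟩ : ∃ p q, P = [p, q] := by
      match P, hlen with
      | [p, q], _ => exact ⟨p, q, rfl⟩
    have hpq : p ++ q = γ := by simpa using hflat
    simp only [List.map_cons, List.map_nil, List.cons.injEq, and_true] at hmap
    have hqd : (γ.drop p.length).sum = b := by
      rw [← hpq, List.drop_left]
      exact hmap.2.symm
    exact hK p.length hqd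
end
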